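/- For every integer p ≥ 2 and all integers n ≥ 2, the number of trees Y in Y^(p)_{n,k} in which the vertex labeled 1 is a leaf equals ((k−1)p − n + 2) · y(n−1, k−1), for 1 ≤ k < n. -/

import Mathlib

/-!
Let `T ∈ Y_{n,k}` have `1` as a leaf. Every vertex outside the maximal decreasing subtree `MD(T)`
is a leaf, so the parent `w` of `1` lies in `MD(T)`; as `w > 1`, also `1 ∈ MD(T)`. Deleting `1`
and lowering all labels by one gives a tree of `Y_{n-1,k-1}` together with the slot of `w` that
`1` occupied, which is now a free slot of an `MD` vertex; conversely, hanging a new smallest label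
in any such free slot gives back a tree of the first kind. In a tree of `Y_{n-1,k-1}` each of the
`n - 2` edges hangs from an `MD` vertex, so exactly `(k - 1) p - (n - 2)` of the `(k - 1) p` slots
of `MD` are free, independently of the tree.
-/

open scoped Classical

/-- A `p`-ary labeled forest: a finite set of vertices (labels, which are
natural numbers), where each non-root vertex has a parent together with a
slot position in `Fin p` (the `p` ordered, possibly empty, child positions),
each (parent, slot) pair is occupied by at most one child, and every vertex
reaches a root (a vertex with no parent) by iterating the parent map. -/
structure PForest (p : ℕ) where
  verts : Finset ℕ
  par : ℕ → Option (ℕ × Fin p)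
  par_eq_none_of_not_mem : ∀ v, v ∉ verts → par v = none
  par_mem : ∀ v ∈ verts, ∀ w s, par v = some (w, s) → w ∈ verts
  par_inj : ∀ u ∈ verts, ∀ v ∈ verts, ∀ w s,
      par u = some (w, s) → par v = some (w, s) → u = v
  reaches_root : ∀ v ∈ verts,
      ∃ k, par ((fun x => ((par x).map Prod.fst).getD x)^[k] v) = none

namespace PForest

variable {p : ℕ}

/-- One step from a vertex towards the root (identity on roots and
non-vertices). -/
def step (T : PForest p) (v : ℕ) : ℕ := ((T.par v).map Prod.fst).getD v

/-- The roots of the forest: vertices with no parent. -/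
def roots (T : PForest p) : Finset ℕ := T.verts.filter (fun v => T.par v = none)

/-- `v` belongs to the maximal decreasing subtree `MD(T)`: every edge on the
path from `v` up to its root goes from a smaller label (child) to a larger
label (parent). -/
def InMD (T : PForest p) (v : ℕ) : Prop :=
  v ∈ T.verts ∧ ∀ k w s, T.par (T.step^[k] v) = some (w, s) → T.step^[k] v < w

/-- The vertex set of the maximal decreasing subtree `MD(T)`. -/
noncomputable def mdSet (T : PForest p) : Finset ℕ :=
  T.verts.filter (fun v => T.InMD v)

/-- `T` is a `p`-ary labeled tree on `[n] = {1, …, n}`: its vertex set is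
`{1, …, n}` and it has exactly one root (and no root when `n = 0`, i.e. the
empty tree). -/
def IsTreeOn (T : PForest p) (n : ℕ) : Prop :=
  T.verts = Finset.Icc 1 n ∧ T.roots.card = min n 1

/-- `v` is a leaf of `T`: it has no children. -/
def IsLeaf (T : PForest p) (v : ℕ) : Prop := ∀ u s, T.par u ≠ some (v, s)

end PForest

/-- `t(n,k)`: the number of `p`-ary labeled trees on `[n]` whose maximal
decreasing subtree has exactly `k` vertices. -/
noncomputable def t (p n k : ℕ) : ℕ :=
  Nat.card {T : PForest p // T.IsTreeOn n ∧ T.mdSet.card = k}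

/-- `y(n,k)`: the number of `p`-ary labeled trees on `[n]` whose maximal
decreasing subtree has exactly `k` vertices and all of whose remaining
`n - k` vertices are (increasing) leaves; equivalently, trees obtained by
attaching `n - k` increasing leaves to a decreasing tree with `k` vertices. -/
noncomputable def y (p n k : ℕ) : ℕ :=
  Nat.card {T : PForest p // T.IsTreeOn n ∧ T.mdSet.card = k ∧
    ∀ v ∈ T.verts, ¬ T.InMD v → T.IsLeaf v}

/-- `f(n,k)`: the number of (unordered) forests on `[n]` consisting of `k`
`p`-ary labeled trees. -/
noncomputable def f (p n k : ℕ) : ℕ :=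
  Nat.card {T : PForest p // T.verts = Finset.Icc 1 n ∧ T.roots.card = k}

namespace Nat

theorem cast_card_sigma_finset_of_card_eq {α β : Type*} {F : α → Finset β} {c : ℤ}
    (h : ∀ a, ((F a).card : ℤ) = c) : (Nat.card (Σ a, F a) : ℤ) = Nat.card α * c := by
  rcases isEmpty_or_nonempty α with hα | ⟨⟨a₀⟩⟩
  · simp
  lift c to ℕ using h a₀ ▸ Nat.cast_nonneg _
  have hc (a : α) : (F a).card = c := by exact_mod_cast h a
  rw [Nat.card_congr ((Equiv.sigmaCongrRight fun a => (F a).equivFinOfCardEq (hc a)).trans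
    (Equiv.sigmaEquivProd α (Fin c))), Nat.card_prod, Nat.card_fin, Nat.cast_mul]

variable {s : Set ℕ}

theorem strictMonoOn_add_one : StrictMonoOn (· + 1) s :=
  fun _ _ _ _ h => Nat.succ_lt_succ h

theorem strictMonoOn_sub_one (h0 : 0 ∉ s) : StrictMonoOn (· - 1) s := by
  intro a ha b _ hab
  have := ne_of_mem_of_not_mem ha h0
  dsimp only
  omega

theorem leftInvOn_add_one : Set.LeftInvOn (· - 1) (· + 1) s :=
  fun x _ => Nat.add_sub_cancel x 1

theorem leftInvOn_sub_one (h0 : 0 ∉ s) : Set.LeftInvOn (· + 1) (· - 1) s := by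
  intro a ha
  have := ne_of_mem_of_not_mem ha h0
  dsimp only
  omega

theorem insert_one_image_add_one_Icc (m : ℕ) :
    insert 1 ((Finset.Icc 1 m).image (· + 1)) = Finset.Icc 1 (m + 1) := by
  ext x
  simp only [Finset.mem_insert, Finset.mem_image, Finset.mem_Icc]
  constructor
  · rintro (rfl | ⟨a, ha, rfl⟩) <;> omega
  · intro hx
    rcases eq_or_ne x 1 with rfl | hx1
    · exact Or.inl rfl
    · exact Or.inr ⟨x - 1, by omega, by omega⟩

theorem image_sub_one_erase_one_Icc (m : ℕ) :
    ((Finset.Icc 1 (m + 1)).erase 1).image (· - 1) = Finset.Icc 1 m := by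
  ext x
  simp only [Finset.mem_image, Finset.mem_erase, Finset.mem_Icc]
  constructor
  · rintro ⟨a, ha, rfl⟩
    omega
  · intro hx
    exact ⟨x + 1, by omega, by omega⟩

end Nat

namespace PForest

variable {p : ℕ}

@[ext]
theorem ext {T U : PForest p} (hverts : T.verts = U.verts) (hpar : T.par = U.par) : T = U := by
  cases T; cases U; simp_all

/-- `step` for a bare parent map, as it appears in the field `reaches_root`. -/
def stepOf (P : ℕ → Option (ℕ × Fin p)) (v : ℕ) : ℕ := ((P v).map Prod.fst).getD v

def SlotFree (T : PForest p) (q : ℕ × Fin p) : Prop := ∀ u, T.par u ≠ some q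

def LeavesOutsideMD (T : PForest p) : Prop := ∀ v ∈ T.verts, ¬ T.InMD v → T.IsLeaf v

noncomputable def freeMDSlots (T : PForest p) : Finset (ℕ × Fin p) :=
  (T.mdSet ×ˢ Finset.univ).filter T.SlotFree

section Basic

variable {T : PForest p} {u v w : ℕ} {s : Fin p}

theorem mem_freeMDSlots : (w, s) ∈ T.freeMDSlots ↔ w ∈ T.mdSet ∧ T.SlotFree (w, s) := by
  simp [freeMDSlots]

theorem isLeaf_iff_forall_slotFree : T.IsLeaf v ↔ ∀ s, T.SlotFree (v, s) :=
  ⟨fun h s u => h u s, fun h u s => h s u⟩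

theorem mem_verts_of_par_eq_some {q : ℕ × Fin p} (h : T.par u = some q) : u ∈ T.verts := by
  by_contra hu
  simp [T.par_eq_none_of_not_mem u hu] at h

theorem par_fst_mem (h : T.par u = some (w, s)) : w ∈ T.verts :=
  T.par_mem u (mem_verts_of_par_eq_some h) w s h

theorem mem_verts_of_mem_mdSet (h : v ∈ T.mdSet) : v ∈ T.verts := (Finset.mem_filter.1 h).1

theorem mem_mdSet : v ∈ T.mdSet ↔ T.InMD v :=
  ⟨fun h => (Finset.mem_filter.1 h).2, fun h => Finset.mem_filter.2 ⟨h.1, h⟩⟩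

theorem step_of_par_eq_some (h : T.par v = some (w, s)) : T.step v = w := by
  simp [step, h]

theorem step_of_par_eq_none (h : T.par v = none) : T.step v = v := by
  simp [step, h]

theorem step_mem (hv : v ∈ T.verts) : T.step v ∈ T.verts := by
  rcases h : T.par v with _ | ⟨w, s⟩
  · rwa [step_of_par_eq_none h]
  · rw [step_of_par_eq_some h]; exact par_fst_mem h

theorem iterate_step_mem (hv : v ∈ T.verts) (k : ℕ) : T.step^[k] v ∈ T.verts := by
  induction k with
  | zero => exact hv
  | succ k ih => rw [Function.iterate_succ_apply']; exact step_mem ih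

theorem iterate_step_ne_of_isLeaf (hleaf : T.IsLeaf v) (hu : u ≠ v) (k : ℕ) :
    T.step^[k] u ≠ v := by
  induction k with
  | zero => exact hu
  | succ k ih =>
    rw [Function.iterate_succ_apply']
    rcases h : T.par (T.step^[k] u) with _ | ⟨w, s⟩
    · rwa [step_of_par_eq_none h]
    · rw [step_of_par_eq_some h]
      rintro rfl
      exact hleaf _ s h

theorem InMD.of_par_eq_some (hw : T.InMD w) (h : T.par u = some (w, s)) (hlt : u < w) :
    T.InMD u := by
  refine ⟨mem_verts_of_par_eq_some h, fun k x t hk => ?_⟩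
  cases k with
  | zero => simp_all
  | succ k =>
    rw [Function.iterate_succ_apply, step_of_par_eq_some h] at hk ⊢
    exact hw.2 k x t hk

theorem LeavesOutsideMD.inMD_of_par_eq_some (hT : T.LeavesOutsideMD)
    (h : T.par u = some (w, s)) : T.InMD w := by
  by_contra hw
  exact hT w (par_fst_mem h) hw u s h

/-- The path from `u` reaches the root without visiting the leaf `v`. -/
theorem par_ne_none_of_isLeaf (hroots : T.roots.card ≤ 1) (hleaf : T.IsLeaf v)
    (hv : v ∈ T.verts) (hu : u ∈ T.verts) (huv : u ≠ v) : T.par v ≠ none := by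
  intro hpar
  obtain ⟨k, hk⟩ := T.reaches_root u hu
  have hvr : v ∈ T.roots := Finset.mem_filter.2 ⟨hv, hpar⟩
  have hur : T.step^[k] u ∈ T.roots := Finset.mem_filter.2 ⟨iterate_step_mem hu k, hk⟩
  exact iterate_step_ne_of_isLeaf hleaf huv k (Finset.card_le_one.1 hroots _ hur _ hvr)

end Basic

section Congr

variable {T U : PForest p} {P : ℕ → Option (ℕ × Fin p)} {u : ℕ}

theorem iterate_stepOf_eq_of_par_eq (h : ∀ k, P (T.step^[k] u) = T.par (T.step^[k] u))
    (k : ℕ) : (stepOf P)^[k] u = T.step^[k] u := by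
  induction k with
  | zero => rfl
  | succ k ih =>
    rw [Function.iterate_succ_apply', Function.iterate_succ_apply', ih]
    simp only [stepOf, step, h k]

theorem inMD_iff_of_par_eq (hu : u ∈ U.verts ↔ u ∈ T.verts)
    (h : ∀ k, U.par (T.step^[k] u) = T.par (T.step^[k] u)) : U.InMD u ↔ T.InMD u := by
  have hstep : ∀ k, U.step^[k] u = T.step^[k] u := iterate_stepOf_eq_of_par_eq h
  simp only [InMD, hu, hstep, h]

theorem iterate_stepOf_eq_of_semiconj {σ : ℕ → ℕ}
    (h : ∀ x ∈ T.verts, P (σ x) = (T.par x).map (Prod.map σ id)) (hu : u ∈ T.verts)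
    (k : ℕ) :
    (stepOf P)^[k] (σ u) = σ (T.step^[k] u) := by
  induction k with
  | zero => rfl
  | succ k ih =>
    rw [Function.iterate_succ_apply', Function.iterate_succ_apply', ih]
    have hx := iterate_step_mem hu k
    rcases hpar : T.par (T.step^[k] u) with _ | ⟨w, s⟩
    · simp [stepOf, h _ hx, hpar, step_of_par_eq_none hpar]
    · simp [stepOf, h _ hx, hpar, step_of_par_eq_some hpar]

end Congr

section Relabel

variable {T : PForest p} {σ τ : ℕ → ℕ}

def relabelPar (T : PForest p) (σ τ : ℕ → ℕ) (v : ℕ) : Option (ℕ × Fin p) :=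
  if v ∈ T.verts.image σ then (T.par (τ v)).map (Prod.map σ id) else none

theorem relabelPar_apply (h : Set.LeftInvOn τ σ T.verts) {u : ℕ} (hu : u ∈ T.verts) :
    T.relabelPar σ τ (σ u) = (T.par u).map (Prod.map σ id) := by
  rw [relabelPar, if_pos (Finset.mem_image_of_mem σ hu), h hu]

theorem relabelPar_eq_some (h : Set.LeftInvOn τ σ T.verts) {v w : ℕ} {s : Fin p}
    (hv : T.relabelPar σ τ v = some (w, s)) :
    ∃ u x, T.par u = some (x, s) ∧ v = σ u ∧ w = σ x := by
  unfold relabelPar at hv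
  split_ifs at hv with hmem
  obtain ⟨u, hu, rfl⟩ := Finset.mem_image.1 hmem
  rw [h hu, Option.map_eq_some_iff] at hv
  obtain ⟨⟨x, t⟩, hx, hxw⟩ := hv
  cases hxw
  exact ⟨u, x, hx, rfl, rfl⟩

def relabel (T : PForest p) (σ τ : ℕ → ℕ) (h : Set.LeftInvOn τ σ T.verts) :
    PForest p where
  verts := T.verts.image σ
  par := T.relabelPar σ τ
  par_eq_none_of_not_mem v hv := if_neg hv
  par_mem := by
    intro v _ w s hw
    obtain ⟨u, x, hx, -, rfl⟩ := relabelPar_eq_some h hw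
    exact Finset.mem_image_of_mem σ (par_fst_mem hx)
  par_inj := by
    intro v _ v' _ w s hw hw'
    obtain ⟨u, x, hx, rfl, rfl⟩ := relabelPar_eq_some h hw
    obtain ⟨u', x', hx', rfl, hxx'⟩ := relabelPar_eq_some h hw'
    rw [h.injOn (par_fst_mem hx) (par_fst_mem hx') hxx'] at hx
    rw [T.par_inj u (mem_verts_of_par_eq_some hx) u' (mem_verts_of_par_eq_some hx') x' s hx hx']
  reaches_root := by
    intro v hv
    obtain ⟨u, hu, rfl⟩ := Finset.mem_image.1 hv
    obtain ⟨k, hk⟩ := T.reaches_root u hu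
    refine ⟨k, ?_⟩
    show T.relabelPar σ τ ((stepOf (T.relabelPar σ τ))^[k] (σ u)) = none
    rw [iterate_stepOf_eq_of_semiconj (fun x hx => relabelPar_apply h hx) hu k,
      relabelPar_apply h (iterate_step_mem hu k)]
    exact Option.map_eq_none_iff.2 hk

variable {h : Set.LeftInvOn τ σ T.verts} {u w : ℕ} {s : Fin p}

theorem relabel_verts : (T.relabel σ τ h).verts = T.verts.image σ := rfl

theorem iterate_step_relabel (hu : u ∈ T.verts) (k : ℕ) :
    (T.relabel σ τ h).step^[k] (σ u) = σ (T.step^[k] u) :=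
  iterate_stepOf_eq_of_semiconj (fun _ hx => relabelPar_apply h hx) hu k

theorem relabel_inMD_iff (hσ : StrictMonoOn σ T.verts) (hu : u ∈ T.verts) :
    (T.relabel σ τ h).InMD (σ u) ↔ T.InMD u := by
  have hmem : σ u ∈ (T.relabel σ τ h).verts := Finset.mem_image_of_mem σ hu
  simp only [InMD, hmem, hu, true_and, iterate_step_relabel hu]
  refine forall_congr' fun k => ?_
  have hx := iterate_step_mem hu k
  show (∀ w s, T.relabelPar σ τ _ = _ → _) ↔ _
  simp only [relabelPar_apply h hx, Option.map_eq_some_iff]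
  constructor
  · intro H w s hw
    exact hσ.lt_iff_lt hx (par_fst_mem hw) |>.1 (H (σ w) s ⟨(w, s), hw, rfl⟩)
  · rintro H _ _ ⟨⟨w, s⟩, hw, hw'⟩
    cases hw'
    exact hσ.lt_iff_lt hx (par_fst_mem hw) |>.2 (H w s hw)

theorem mdSet_relabel (hσ : StrictMonoOn σ T.verts) :
    (T.relabel σ τ h).mdSet = T.mdSet.image σ := by
  ext v
  simp only [mem_mdSet, Finset.mem_image]
  constructor
  · intro hv
    obtain ⟨u, hu, rfl⟩ := Finset.mem_image.1 hv.1
    exact ⟨u, (relabel_inMD_iff hσ hu).1 hv, rfl⟩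
  · rintro ⟨u, hu, rfl⟩
    exact (relabel_inMD_iff hσ hu.1).2 hu

theorem card_mdSet_relabel (hσ : StrictMonoOn σ T.verts) :
    (T.relabel σ τ h).mdSet.card = T.mdSet.card := by
  rw [mdSet_relabel hσ, Finset.card_image_of_injOn]
  exact h.injOn.mono fun _ hv => mem_verts_of_mem_mdSet hv

theorem roots_relabel : (T.relabel σ τ h).roots = T.roots.image σ := by
  ext v
  simp only [roots, Finset.mem_filter, Finset.mem_image, relabel_verts]
  constructor
  · rintro ⟨⟨u, hu, rfl⟩, hv⟩
    refine ⟨u, ⟨hu, ?_⟩, rfl⟩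
    simpa [relabel, relabelPar_apply h hu] using hv
  · rintro ⟨u, ⟨hu, hpar⟩, rfl⟩
    refine ⟨⟨u, hu, rfl⟩, ?_⟩
    simp [relabel, relabelPar_apply h hu, hpar]

theorem card_roots_relabel : (T.relabel σ τ h).roots.card = T.roots.card := by
  rw [roots_relabel, Finset.card_image_of_injOn]
  exact h.injOn.mono fun _ hv => (Finset.mem_filter.1 hv).1

theorem SlotFree.relabel (hfree : T.SlotFree (w, s)) (hw : w ∈ T.verts) :
    (T.relabel σ τ h).SlotFree (σ w, s) := by
  intro v hv
  obtain ⟨u, x, hx, -, hxw⟩ := relabelPar_eq_some h hv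
  rw [h.injOn (par_fst_mem hx) hw hxw.symm] at hx
  exact hfree u hx

theorem LeavesOutsideMD.relabel (hT : T.LeavesOutsideMD) (hσ : StrictMonoOn σ T.verts) :
    (T.relabel σ τ h).LeavesOutsideMD := by
  intro v hv hmd
  obtain ⟨u, hu, rfl⟩ := Finset.mem_image.1 hv
  rw [relabel_inMD_iff hσ hu] at hmd
  exact isLeaf_iff_forall_slotFree.2 fun s =>
    (isLeaf_iff_forall_slotFree.1 (hT u hu hmd) s).relabel hu

theorem mem_freeMDSlots_relabel (hσ : StrictMonoOn σ T.verts) (hws : (w, s) ∈ T.freeMDSlots) :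
    (σ w, s) ∈ (T.relabel σ τ h).freeMDSlots := by
  rw [mem_freeMDSlots] at hws ⊢
  rw [mdSet_relabel hσ]
  exact ⟨Finset.mem_image_of_mem σ hws.1, hws.2.relabel (mem_verts_of_mem_mdSet hws.1)⟩

theorem relabel_relabel (h' : Set.LeftInvOn σ τ (T.relabel σ τ h).verts) :
    (T.relabel σ τ h).relabel τ σ h' = T := by
  have hverts : (T.verts.image σ).image τ = T.verts := by
    rw [Finset.image_image, Finset.image_congr (f := τ ∘ σ) (g := id) h, Finset.image_id]
  ext1
  · exact hverts
  · funext v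
    show (T.relabel σ τ h).relabelPar τ σ v = T.par v
    unfold relabelPar
    rw [relabel_verts, hverts]
    split_ifs with hv
    · rw [show (T.relabel σ τ h).par (σ v) = _ from relabelPar_apply h hv, Option.map_map]
      rcases hpar : T.par v with _ | ⟨w, s⟩
      · rfl
      · simp [h (par_fst_mem hpar)]
    · exact (T.par_eq_none_of_not_mem v hv).symm

end Relabel

section Leaf

variable {T : PForest p} {u v w : ℕ} {s : Fin p}

def removeLeaf (T : PForest p) (v : ℕ) (hv : T.IsLeaf v) : PForest p where
  verts := T.verts.erase v
  par := Function.update T.par v none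
  par_eq_none_of_not_mem u hu := by
    rcases eq_or_ne u v with rfl | huv
    · exact Function.update_self ..
    · rw [Function.update_of_ne huv]
      exact T.par_eq_none_of_not_mem u fun h => hu (Finset.mem_erase.2 ⟨huv, h⟩)
  par_mem := by
    intro u hu w s hw
    rw [Function.update_of_ne (Finset.ne_of_mem_erase hu)] at hw
    exact Finset.mem_erase.2 ⟨fun hwv => hv u s (hwv ▸ hw), par_fst_mem hw⟩
  par_inj := by
    intro u hu u' hu' w s hw hw'
    rw [Function.update_of_ne (Finset.ne_of_mem_erase hu)] at hw
    rw [Function.update_of_ne (Finset.ne_of_mem_erase hu')] at hw'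
    exact T.par_inj u (Finset.mem_of_mem_erase hu) u' (Finset.mem_of_mem_erase hu') w s hw hw'
  reaches_root := by
    intro u hu
    have hpath : ∀ k, Function.update T.par v none (T.step^[k] u) = T.par (T.step^[k] u) :=
      fun k => Function.update_of_ne (iterate_step_ne_of_isLeaf hv (Finset.ne_of_mem_erase hu) k) ..
    obtain ⟨k, hk⟩ := T.reaches_root u (Finset.mem_of_mem_erase hu)
    refine ⟨k, ?_⟩
    show Function.update T.par v none ((stepOf (Function.update T.par v none))^[k] u) = none
    rw [iterate_stepOf_eq_of_par_eq hpath, hpath]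
    exact hk

def addLeaf (T : PForest p) (v w : ℕ) (s : Fin p) (hv : v ∉ T.verts) (hw : w ∈ T.verts)
    (hfree : T.SlotFree (w, s)) : PForest p where
  verts := insert v T.verts
  par := Function.update T.par v (some (w, s))
  par_eq_none_of_not_mem u hu := by
    rw [Finset.mem_insert, not_or] at hu
    rw [Function.update_of_ne hu.1]
    exact T.par_eq_none_of_not_mem u hu.2
  par_mem := by
    intro u _ x t hx
    rcases eq_or_ne u v with rfl | huv
    · rw [Function.update_self, Option.some_inj, Prod.mk.injEq] at hx
      exact Finset.mem_insert_of_mem (hx.1 ▸ hw)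
    · rw [Function.update_of_ne huv] at hx
      exact Finset.mem_insert_of_mem (par_fst_mem hx)
  par_inj := by
    intro u _ u' _ x t hx hx'
    rcases eq_or_ne u v with rfl | huv <;> rcases eq_or_ne u' u with rfl | hu'v
    · rfl
    · rw [Function.update_self] at hx
      rw [Function.update_of_ne hu'v, ← hx] at hx'
      exact absurd hx' (hfree u')
    · rfl
    rcases eq_or_ne u' v with rfl | hu'v
    · rw [Function.update_self] at hx'
      rw [Function.update_of_ne huv, ← hx'] at hx
      exact absurd hx (hfree u)
    rw [Function.update_of_ne huv] at hx
    rw [Function.update_of_ne hu'v] at hx'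
    exact T.par_inj u (mem_verts_of_par_eq_some hx) u' (mem_verts_of_par_eq_some hx') x t hx hx'
  reaches_root := by
    have hroot : ∀ u ∈ T.verts, ∃ k, Function.update T.par v (some (w, s))
        ((stepOf (Function.update T.par v (some (w, s))))^[k] u) = none := by
      intro u hu
      have hpath : ∀ k,
          Function.update T.par v (some (w, s)) (T.step^[k] u) = T.par (T.step^[k] u) :=
        fun k => Function.update_of_ne (ne_of_mem_of_not_mem (iterate_step_mem hu k) hv) ..
      obtain ⟨k, hk⟩ := T.reaches_root u hu
      exact ⟨k, by rw [iterate_stepOf_eq_of_par_eq hpath, hpath]; exact hk⟩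
    intro u hu
    rcases Finset.mem_insert.1 hu with rfl | hu
    · obtain ⟨k, hk⟩ := hroot w hw
      refine ⟨k + 1, ?_⟩
      have hstep : stepOf (Function.update T.par u (some (w, s))) u = w := by simp [stepOf]
      show Function.update T.par u (some (w, s)) ((stepOf _)^[k + 1] u) = none
      rwa [Function.iterate_succ_apply, hstep]
    · exact hroot u hu

variable {hv : T.IsLeaf v}

theorem removeLeaf_verts : (T.removeLeaf v hv).verts = T.verts.erase v := rfl

theorem removeLeaf_par : (T.removeLeaf v hv).par = Function.update T.par v none := rfl

theorem zero_notMem_removeLeaf (h0 : 0 ∉ T.verts) : 0 ∉ (T.removeLeaf v hv).verts :=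
  fun h => h0 (Finset.mem_of_mem_erase h)

theorem removeLeaf_par_eq_some {q : ℕ × Fin p} :
    (T.removeLeaf v hv).par u = some q ↔ u ≠ v ∧ T.par u = some q := by
  rcases eq_or_ne u v with rfl | huv
  · simp [removeLeaf_par]
  · simp [removeLeaf_par, huv]

theorem removeLeaf_inMD_iff (huv : u ≠ v) : (T.removeLeaf v hv).InMD u ↔ T.InMD u :=
  inMD_iff_of_par_eq (by simp [removeLeaf, huv])
    fun k => Function.update_of_ne (iterate_step_ne_of_isLeaf hv huv k) ..

theorem mdSet_removeLeaf : (T.removeLeaf v hv).mdSet = T.mdSet.erase v := by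
  ext u
  rcases eq_or_ne u v with rfl | huv
  · simp [mdSet, removeLeaf_verts]
  · rw [Finset.mem_erase, mem_mdSet, mem_mdSet, removeLeaf_inMD_iff huv]
    exact (and_iff_right huv).symm

theorem roots_removeLeaf : (T.removeLeaf v hv).roots = T.roots.erase v := by
  ext u
  simp only [roots, Finset.mem_filter]
  simp only [Finset.mem_erase, removeLeaf_verts, removeLeaf_par]
  rcases eq_or_ne u v with rfl | huv
  · simp
  · simp [huv]

theorem SlotFree.removeLeaf {q : ℕ × Fin p} (hq : T.SlotFree q) :
    (T.removeLeaf v hv).SlotFree q :=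
  fun u hu => hq u (removeLeaf_par_eq_some.1 hu).2

theorem slotFree_removeLeaf {q : ℕ × Fin p} (hvq : T.par v = some q) :
    (T.removeLeaf v hv).SlotFree q := by
  intro u hu
  obtain ⟨huv, hq⟩ := removeLeaf_par_eq_some.1 hu
  exact huv (T.par_inj u (mem_verts_of_par_eq_some hq) v (mem_verts_of_par_eq_some hvq) _ _ hq hvq)

theorem LeavesOutsideMD.removeLeaf (hT : T.LeavesOutsideMD) :
    (T.removeLeaf v hv).LeavesOutsideMD := by
  intro u hu hmd
  obtain ⟨huv, hu⟩ := Finset.mem_erase.1 hu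
  rw [removeLeaf_inMD_iff huv] at hmd
  exact isLeaf_iff_forall_slotFree.2 fun s =>
    (isLeaf_iff_forall_slotFree.1 (hT u hu hmd) s).removeLeaf

variable {hv' : v ∉ T.verts} {hw : w ∈ T.verts} {hfree : T.SlotFree (w, s)}

theorem addLeaf_verts : (T.addLeaf v w s hv' hw hfree).verts = insert v T.verts := rfl

theorem addLeaf_par :
    (T.addLeaf v w s hv' hw hfree).par = Function.update T.par v (some (w, s)) := rfl

theorem addLeaf_par_self : (T.addLeaf v w s hv' hw hfree).par v = some (w, s) :=
  Function.update_self ..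

theorem addLeaf_inMD_iff (hu : u ∈ T.verts) :
    (T.addLeaf v w s hv' hw hfree).InMD u ↔ T.InMD u :=
  inMD_iff_of_par_eq (by simp [addLeaf, hu])
    fun k => Function.update_of_ne (ne_of_mem_of_not_mem (iterate_step_mem hu k) hv') ..

theorem mdSet_addLeaf (hlt : v < w) (hwMD : T.InMD w) :
    (T.addLeaf v w s hv' hw hfree).mdSet = insert v T.mdSet := by
  ext u
  rw [Finset.mem_insert, mem_mdSet, mem_mdSet]
  rcases eq_or_ne u v with rfl | huv
  · simp only [true_or, iff_true]
    exact ((addLeaf_inMD_iff hw).2 hwMD).of_par_eq_some addLeaf_par_self hlt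
  · simp only [huv, false_or]
    by_cases hu : u ∈ T.verts
    · exact addLeaf_inMD_iff hu
    · exact iff_of_false (fun h => by simpa [addLeaf, huv, hu] using h.1) fun h => hu h.1

theorem roots_addLeaf : (T.addLeaf v w s hv' hw hfree).roots = T.roots := by
  ext u
  simp only [roots, Finset.mem_filter]
  simp only [Finset.mem_insert, addLeaf_verts, addLeaf_par]
  rcases eq_or_ne u v with rfl | huv
  · simp [hv']
  · simp [huv]

theorem isLeaf_addLeaf_self : (T.addLeaf v w s hv' hw hfree).IsLeaf v := by
  intro u t hu
  rcases eq_or_ne u v with rfl | huv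
  · rw [addLeaf_par_self, Option.some_inj, Prod.mk.injEq] at hu
    exact hv' (hu.1 ▸ hw)
  · rw [addLeaf_par, Function.update_of_ne huv] at hu
    exact hv' (par_fst_mem hu)

theorem LeavesOutsideMD.addLeaf (hT : T.LeavesOutsideMD) (hwMD : T.InMD w) :
    (T.addLeaf v w s hv' hw hfree).LeavesOutsideMD := by
  intro u hu hmd
  rcases Finset.mem_insert.1 hu with rfl | hu
  · exact isLeaf_addLeaf_self
  rw [addLeaf_inMD_iff hu] at hmd
  intro x t hx
  rcases eq_or_ne x v with rfl | hxv
  · rw [addLeaf_par_self, Option.some_inj, Prod.mk.injEq] at hx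
    exact hmd (hx.1 ▸ hwMD)
  · rw [addLeaf_par, Function.update_of_ne hxv] at hx
    exact hT u hu hmd x t hx

theorem removeLeaf_addLeaf (hleaf : (T.addLeaf v w s hv' hw hfree).IsLeaf v) :
    (T.addLeaf v w s hv' hw hfree).removeLeaf v hleaf = T := by
  ext1
  · exact Finset.erase_insert hv'
  · simp only [removeLeaf, addLeaf, Function.update_idem]
    rw [← T.par_eq_none_of_not_mem v hv', Function.update_eq_self]

theorem addLeaf_removeLeaf (hvq : T.par v = some (w, s)) {hv' hw hfree} :
    (T.removeLeaf v hv).addLeaf v w s hv' hw hfree = T := by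
  ext1
  · exact Finset.insert_erase (mem_verts_of_par_eq_some hvq)
  · simp only [removeLeaf, addLeaf, Function.update_idem]
    rw [← hvq, Function.update_eq_self]

end Leaf

section Count

variable {T : PForest p}

/-- Each non-root vertex occupies one slot of its parent, which lies in `MD(T)`, and distinct
vertices occupy distinct slots. -/
theorem LeavesOutsideMD.card_freeMDSlots_add (hT : T.LeavesOutsideMD) :
    T.freeMDSlots.card + T.verts.card = T.mdSet.card * p + T.roots.card := by
  set nonroots := T.verts.filter (fun u => T.par u ≠ none)
  set occupied := (T.mdSet ×ˢ Finset.univ).filter (fun q => ¬ T.SlotFree q)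
  have hverts : T.roots.card + nonroots.card = T.verts.card :=
    Finset.card_filter_add_card_filter_not _
  have hslots : T.freeMDSlots.card + occupied.card = T.mdSet.card * p := by
    rw [freeMDSlots, Finset.card_filter_add_card_filter_not, Finset.card_product,
      Finset.card_univ, Fintype.card_fin]
  have hget (u : ℕ) (hu : u ∈ nonroots) :
      T.par u = some ((T.par u).get (Option.isSome_iff_ne_none.2 (Finset.mem_filter.1 hu).2)) :=
    (Option.some_get _).symm
  have hocc : nonroots.card = occupied.card := by
    refine Finset.card_bij
      (fun u hu => (T.par u).get (Option.isSome_iff_ne_none.2 (Finset.mem_filter.1 hu).2))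
      (fun u hu => ?_) (fun u hu u' hu' huu' => ?_) (fun q hq => ?_)
    · exact Finset.mem_filter.2 ⟨Finset.mem_product.2
        ⟨mem_mdSet.2 (hT.inMD_of_par_eq_some (hget u hu)), Finset.mem_univ _⟩,
        fun h => h u (hget u hu)⟩
    · have hpar := hget u hu
      rw [huu'] at hpar
      exact T.par_inj u (Finset.mem_filter.1 hu).1 u' (Finset.mem_filter.1 hu').1 _ _ hpar
        (hget u' hu')
    · obtain ⟨u, hu⟩ := not_forall_not.1 (Finset.mem_filter.1 hq).2
      refine ⟨u, Finset.mem_filter.2 ⟨mem_verts_of_par_eq_some hu, by simp [hu]⟩, ?_⟩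
      simp [hu]
  omega

end Count

section InsertDelete

variable {T U : PForest p} {w : ℕ} {s : Fin p}

theorem zero_notMem_of_isTreeOn {n : ℕ} (hT : T.IsTreeOn n) : 0 ∉ T.verts := by
  simp [hT.1]

theorem isSome_par_one {m : ℕ} (hT : T.IsTreeOn (m + 1)) (hm : 1 ≤ m) (h1 : T.IsLeaf 1) :
    (T.par 1).isSome :=
  Option.isSome_iff_ne_none.2 <| par_ne_none_of_isLeaf (u := 2) (by rw [hT.2]; omega) h1
    (by simp [hT.1]) (by simp [hT.1]; omega) (by norm_num)

theorem LeavesOutsideMD.one_mem_mdSet (hT : T.LeavesOutsideMD) (h0 : 0 ∉ T.verts)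
    (h1 : T.IsLeaf 1) (hpar : T.par 1 = some (w, s)) : 1 ∈ T.mdSet := by
  have hw0 : w ≠ 0 := ne_of_mem_of_not_mem (par_fst_mem hpar) h0
  have hw1 : w ≠ 1 := by rintro rfl; exact h1 1 s hpar
  exact mem_mdSet.2 ((hT.inMD_of_par_eq_some hpar).of_par_eq_some hpar (by omega))

theorem one_notMem_relabel_add_one (h0 : 0 ∉ U.verts) {h} :
    1 ∉ (U.relabel (· + 1) (· - 1) h).verts := by
  rw [relabel_verts, Finset.mem_image]
  rintro ⟨u, hu, hu1⟩
  obtain rfl : u = 0 := by omega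
  exact h0 hu

def insertOne (U : PForest p) (w : ℕ) (s : Fin p) (h0 : 0 ∉ U.verts)
    (hws : (w, s) ∈ U.freeMDSlots) : PForest p :=
  (U.relabel (· + 1) (· - 1) Nat.leftInvOn_add_one).addLeaf 1 (w + 1) s
    (one_notMem_relabel_add_one h0)
    (mem_verts_of_mem_mdSet
      (mem_freeMDSlots.1 (mem_freeMDSlots_relabel Nat.strictMonoOn_add_one hws)).1)
    (mem_freeMDSlots.1 (mem_freeMDSlots_relabel Nat.strictMonoOn_add_one hws)).2

def deleteOne (T : PForest p) (h1 : T.IsLeaf 1) (h0 : 0 ∉ T.verts) : PForest p :=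
  (T.removeLeaf 1 h1).relabel (· - 1) (· + 1) (Nat.leftInvOn_sub_one (zero_notMem_removeLeaf h0))

variable {m : ℕ} {h0 : 0 ∉ U.verts} {hws : (w, s) ∈ U.freeMDSlots}

theorem insertOne_isTreeOn (hU : U.IsTreeOn m) (hm : 1 ≤ m) :
    (U.insertOne w s h0 hws).IsTreeOn (m + 1) := by
  refine ⟨?_, ?_⟩
  · rw [insertOne, addLeaf_verts, relabel_verts, hU.1, Nat.insert_one_image_add_one_Icc]
  · rw [insertOne, roots_addLeaf, card_roots_relabel, hU.2]
    omega

theorem card_mdSet_insertOne : (U.insertOne w s h0 hws).mdSet.card = U.mdSet.card + 1 := by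
  have hw := mem_freeMDSlots.1 hws
  have hw0 : w ≠ 0 := ne_of_mem_of_not_mem (mem_verts_of_mem_mdSet hw.1) h0
  rw [insertOne, mdSet_addLeaf (by omega), Finset.card_insert_of_notMem,
    card_mdSet_relabel Nat.strictMonoOn_add_one]
  · exact fun h => one_notMem_relabel_add_one h0 (mem_verts_of_mem_mdSet h)
  · exact (relabel_inMD_iff Nat.strictMonoOn_add_one (mem_verts_of_mem_mdSet hw.1)).2
      (mem_mdSet.1 hw.1)

theorem LeavesOutsideMD.insertOne (hU : U.LeavesOutsideMD) :
    (U.insertOne w s h0 hws).LeavesOutsideMD := by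
  have hw := mem_freeMDSlots.1 hws
  exact (hU.relabel Nat.strictMonoOn_add_one).addLeaf
    ((relabel_inMD_iff Nat.strictMonoOn_add_one (mem_verts_of_mem_mdSet hw.1)).2 (mem_mdSet.1 hw.1))

theorem isLeaf_one_insertOne : (U.insertOne w s h0 hws).IsLeaf 1 := isLeaf_addLeaf_self

theorem insertOne_par_one : (U.insertOne w s h0 hws).par 1 = some (w + 1, s) := addLeaf_par_self

variable {h1 : T.IsLeaf 1} {h0' : 0 ∉ T.verts}

theorem deleteOne_isTreeOn (hT : T.IsTreeOn (m + 1)) (hm : 1 ≤ m) (hpar : (T.par 1).isSome) :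
    (T.deleteOne h1 h0').IsTreeOn m := by
  refine ⟨?_, ?_⟩
  · rw [deleteOne, relabel_verts, removeLeaf_verts, hT.1, Nat.image_sub_one_erase_one_Icc]
  · rw [deleteOne, card_roots_relabel, roots_removeLeaf,
      Finset.erase_eq_of_notMem (s := T.roots)
        fun h => Option.isSome_iff_ne_none.1 hpar (Finset.mem_filter.1 h).2, hT.2]
    omega

theorem card_mdSet_deleteOne : (T.deleteOne h1 h0').mdSet.card = (T.mdSet.erase 1).card := by
  rw [deleteOne, card_mdSet_relabel (Nat.strictMonoOn_sub_one (zero_notMem_removeLeaf h0')),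
    mdSet_removeLeaf]

theorem LeavesOutsideMD.deleteOne (hT : T.LeavesOutsideMD) :
    (T.deleteOne h1 h0').LeavesOutsideMD :=
  hT.removeLeaf.relabel (Nat.strictMonoOn_sub_one (zero_notMem_removeLeaf h0'))

theorem mem_freeMDSlots_deleteOne (hT : T.LeavesOutsideMD) {q : ℕ × Fin p}
    (hpar : T.par 1 = some q) : (q.1 - 1, q.2) ∈ (T.deleteOne h1 h0').freeMDSlots := by
  obtain ⟨w, s⟩ := q
  refine mem_freeMDSlots_relabel (Nat.strictMonoOn_sub_one (zero_notMem_removeLeaf h0')) ?_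
  rw [mem_freeMDSlots, mdSet_removeLeaf]
  refine ⟨Finset.mem_erase.2 ⟨?_, mem_mdSet.2 (hT.inMD_of_par_eq_some hpar)⟩,
    slotFree_removeLeaf hpar⟩
  rintro rfl
  exact h1 1 s hpar

theorem deleteOne_insertOne {h1 h0'} : (U.insertOne w s h0 hws).deleteOne h1 h0' = U := by
  simp only [deleteOne, insertOne, removeLeaf_addLeaf, relabel_relabel]

theorem insertOne_deleteOne {q : ℕ × Fin p} (hpar : T.par 1 = some q) {h0 hws} :
    (T.deleteOne h1 h0').insertOne (q.1 - 1) q.2 h0 hws = T := by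
  obtain ⟨w, s⟩ := q
  have hw : w - 1 + 1 = w := Nat.sub_add_cancel (Nat.pos_of_ne_zero
    (ne_of_mem_of_not_mem (par_fst_mem hpar) h0'))
  simp only [deleteOne, insertOne, relabel_relabel, hw]
  exact addLeaf_removeLeaf hpar

end InsertDelete

theorem LeavesOutsideMD.card_freeMDSlots_add_of_isTreeOn {T : PForest p} {m : ℕ}
    (hT : T.LeavesOutsideMD) (hTm : T.IsTreeOn m) (hm : 1 ≤ m) :
    T.freeMDSlots.card + m = T.mdSet.card * p + 1 := by
  have h := hT.card_freeMDSlots_add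
  rwa [hTm.1, Nat.card_Icc, hTm.2, Nat.add_sub_cancel, Nat.min_eq_right hm] at h

def leafOneEquiv (m j : ℕ) (hm : 1 ≤ m) :
    {T : PForest p // T.IsTreeOn (m + 1) ∧ T.mdSet.card = j + 1 ∧ T.LeavesOutsideMD ∧
        T.IsLeaf 1} ≃
      Σ U : {U : PForest p // U.IsTreeOn m ∧ U.mdSet.card = j ∧ U.LeavesOutsideMD},
        U.1.freeMDSlots where
  toFun T :=
    ⟨⟨T.1.deleteOne T.2.2.2.2 (zero_notMem_of_isTreeOn T.2.1),
        deleteOne_isTreeOn T.2.1 hm (isSome_par_one T.2.1 hm T.2.2.2.2),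
        by rw [card_mdSet_deleteOne, Finset.card_erase_of_mem (T.2.2.2.1.one_mem_mdSet
          (zero_notMem_of_isTreeOn T.2.1) T.2.2.2.2
          (Option.some_get (isSome_par_one T.2.1 hm T.2.2.2.2)).symm), T.2.2.1,
          Nat.add_sub_cancel],
        T.2.2.2.1.deleteOne⟩,
      ⟨(((T.1.par 1).get (isSome_par_one T.2.1 hm T.2.2.2.2)).1 - 1,
          ((T.1.par 1).get (isSome_par_one T.2.1 hm T.2.2.2.2)).2),
        mem_freeMDSlots_deleteOne (h0' := zero_notMem_of_isTreeOn T.2.1) T.2.2.2.1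
          (Option.some_get _).symm⟩⟩
  invFun x :=
    ⟨x.1.1.insertOne x.2.1.1 x.2.1.2 (zero_notMem_of_isTreeOn x.1.2.1) x.2.2,
      insertOne_isTreeOn x.1.2.1 hm, by rw [card_mdSet_insertOne, x.1.2.2.1],
      x.1.2.2.2.insertOne, isLeaf_one_insertOne⟩
  left_inv T := by
    apply Subtype.ext
    simp only [insertOne_deleteOne (Option.some_get (isSome_par_one T.2.1 hm T.2.2.2.2)).symm]
  right_inv x := by
    dsimp only
    apply Sigma.subtype_ext
    · apply Subtype.ext
      simp only [deleteOne_insertOne]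
    · simp [insertOne_par_one]

end PForest

theorem stmt5_general (p n k : ℕ) (hn : 2 ≤ n) (hk1 : 1 ≤ k) :
    (Nat.card {T : PForest p // T.IsTreeOn n ∧ T.mdSet.card = k ∧
        (∀ v ∈ T.verts, ¬ T.InMD v → T.IsLeaf v) ∧ T.IsLeaf 1} : ℤ)
      = (((k : ℤ) - 1) * p - n + 2) * (y p (n - 1) (k - 1) : ℤ) := by
  obtain ⟨m, rfl⟩ : ∃ m, n = m + 1 := ⟨n - 1, by omega⟩
  obtain ⟨j, rfl⟩ : ∃ j, k = j + 1 := ⟨k - 1, by omega⟩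
  have hm : 1 ≤ m := by omega
  refine (congrArg Nat.cast (Nat.card_congr (PForest.leafOneEquiv m j hm))).trans ?_
  rw [Nat.cast_card_sigma_finset_of_card_eq (c := j * p + 1 - m) fun U => ?_]
  · simp only [y, PForest.LeavesOutsideMD, Nat.add_sub_cancel]
    push_cast
    ring
  · have hcount := U.2.2.2.card_freeMDSlots_add_of_isTreeOn U.2.1 hm
    rw [U.2.2.1] at hcount
    linarith [congrArg (Nat.cast (R := ℤ)) hcount]

/-- The number of trees in `Y^(p)_{n,k}` in which the vertex labeled `1` is a
leaf equals `((k-1)p - n + 2) · y(n-1, k-1)`. -/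
theorem stmt5 (p n k : ℕ) (hp : 2 ≤ p) (hn : 2 ≤ n) (hk1 : 1 ≤ k) (hkn : k < n) :
    (Nat.card {T : PForest p // T.IsTreeOn n ∧ T.mdSet.card = k ∧
        (∀ v ∈ T.verts, ¬ T.InMD v → T.IsLeaf v) ∧ T.IsLeaf 1} : ℤ)
      = (((k : ℤ) - 1) * p - n + 2) * (y p (n - 1) (k - 1) : ℤ) :=
  stmt5_general p n k hn hk1
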